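/- For θ > 0, the function θ·coth(θ) is strictly greater than 1; consequently, the Hessian of the hyperbolic squared distance, H = 2J(uu^T + θcoth(θ)(J + xx^T − uu^T))J restricted to T_x H^n, is positive definite for all y ≠ x. -/

import Mathlib

/-- The Minkowski form `⟪x,y⟫_* = -x₀y₀ + Σ_{i≥1} x_i y_i` on `ℝ^{n+1}`. -/
noncomputable def mink {n : ℕ} (x y : EuclideanSpace ℝ (Fin (n + 1))) : ℝ :=
  (∑ i, x i * y i) - 2 * x 0 * y 0

/-!
Since `(θ cosh θ - sinh θ)' = θ sinh θ > 0`, one has `θ coth θ > 1`. On the tangent space of the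
hyperboloid the Minkowski form is positive definite (reverse Cauchy–Schwarz against the timelike
`x`), and applying this to `v - ⟪u,v⟫_* u` gives `⟪u,v⟫_*² ≤ ⟪v,v⟫_*`. Hence
`H(v,v) / 2 = ⟪u,v⟫_*² + θ coth θ (⟪v,v⟫_* - ⟪u,v⟫_*²) ≥ ⟪v,v⟫_* > 0`.
-/

open Finset Real

lemma Real.sinh_lt_mul_cosh {s : ℝ} (hs : 0 < s) : sinh s < s * cosh s := by
  have hmono : StrictMonoOn (fun t : ℝ => t * cosh t - sinh t) (Set.Ici 0) := by
    apply strictMonoOn_of_deriv_pos (convex_Ici 0) (by fun_prop)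
    intro t ht
    rw [interior_Ici, Set.mem_Ioi] at ht
    have hderiv : HasDerivAt (fun t : ℝ => t * cosh t - sinh t)
        (1 * cosh t + t * sinh t - cosh t) t :=
      ((hasDerivAt_id t).mul (hasDerivAt_cosh t)).sub (hasDerivAt_sinh t)
    rw [hderiv.deriv]
    nlinarith [mul_pos ht (sinh_pos_iff.2 ht)]
  simpa using hmono Set.self_mem_Ici (Set.mem_Ici.2 hs.le) hs

lemma Real.one_lt_mul_coth {s : ℝ} (hs : 0 < s) : 1 < s * (cosh s / sinh s) := by
  rw [mul_div_assoc', one_lt_div (sinh_pos_iff.2 hs)]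
  exact sinh_lt_mul_cosh hs

namespace mink

variable {n : ℕ}

lemma eq_sum_erase_sub (x y : EuclideanSpace ℝ (Fin (n + 1))) :
    mink x y = (∑ i ∈ univ.erase 0, x i * y i) - x 0 * y 0 := by
  rw [mink, ← add_sum_erase _ _ (mem_univ 0)]
  ring

lemma comm (x y : EuclideanSpace ℝ (Fin (n + 1))) : mink x y = mink y x := by
  simp only [mink, mul_comm (x _)]
  ring

lemma sub_right (x y z : EuclideanSpace ℝ (Fin (n + 1))) :
    mink x (y - z) = mink x y - mink x z := by
  simp only [mink, PiLp.sub_apply, mul_sub, sum_sub_distrib]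
  ring

lemma smul_right (x y : EuclideanSpace ℝ (Fin (n + 1))) (t : ℝ) :
    mink x (t • y) = t * mink x y := by
  simp only [mink, PiLp.smul_apply, smul_eq_mul, mul_sum, mul_sub]
  exact congrArg₂ _ (sum_congr rfl fun _ _ => by ring) (by ring)

lemma sub_left (x y z : EuclideanSpace ℝ (Fin (n + 1))) :
    mink (x - y) z = mink x z - mink y z := by
  rw [comm, sub_right, comm z, comm z]

lemma smul_left (x y : EuclideanSpace ℝ (Fin (n + 1))) (t : ℝ) :
    mink (t • x) y = t * mink x y := by
  rw [comm, smul_right, comm]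

lemma pos_of_timelike_of_orthogonal {x v : EuclideanSpace ℝ (Fin (n + 1))}
    (hx : mink x x < 0) (hxv : mink x v = 0) (hv : v ≠ 0) : 0 < mink v v := by
  have hcs := sum_mul_sq_le_sq_mul_sq (univ.erase 0) (fun i => x i) (fun i => v i)
  have hxx := eq_sum_erase_sub x x
  have hvv := eq_sum_erase_sub v v
  have hxv' := eq_sum_erase_sub x v
  have hnorm : 0 < ‖v‖ ^ 2 := by positivity
  rw [EuclideanSpace.norm_sq_eq, ← add_sum_erase _ _ (mem_univ 0)] at hnorm
  simp only [Real.norm_eq_abs, sq_abs, ← sq] at hxx hvv hcs hnorm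
  set E := univ.erase (0 : Fin (n + 1))
  have hSx : 0 ≤ ∑ i ∈ E, x i ^ 2 := sum_nonneg fun _ _ => sq_nonneg _
  -- Cauchy–Schwarz on the spatial parts: `x₀²v₀² = ⟨x̄,v̄⟩² ≤ |x̄|²|v̄|² ≤ x₀²|v̄|²`, strictly
  -- unless `v̄ = 0`, and `v̄ = 0` forces `v₀ = 0`.
  rw [show ∑ i ∈ E, x i * v i = x 0 * v 0 by linarith] at hcs
  nlinarith [mul_nonneg hSx (sq_nonneg (v 0)), sq_nonneg (x 0)]

lemma nonneg_of_timelike_of_orthogonal {x v : EuclideanSpace ℝ (Fin (n + 1))}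
    (hx : mink x x < 0) (hxv : mink x v = 0) : 0 ≤ mink v v := by
  rcases eq_or_ne v 0 with rfl | hv
  · simp [mink]
  · exact (pos_of_timelike_of_orthogonal hx hxv hv).le

lemma sq_le_of_timelike_of_orthogonal {x u v : EuclideanSpace ℝ (Fin (n + 1))}
    (hx : mink x x < 0) (hu : mink u u = 1) (hxu : mink x u = 0) (hxv : mink x v = 0) :
    mink u v ^ 2 ≤ mink v v := by
  set t := mink u v
  have hw : mink x (v - t • u) = 0 := by
    rw [sub_right, smul_right, hxv, hxu]
    ring
  have hww := nonneg_of_timelike_of_orthogonal hx hw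
  simp only [sub_left, sub_right, smul_left, smul_right, hu] at hww
  rw [comm v u] at hww
  nlinarith

end mink

theorem stmt13_general {n : ℕ} (x u : EuclideanSpace ℝ (Fin (n + 1)))
    (hx : mink x x = -1)
    (hu : mink u u = 1) (hxu : mink x u = 0)
    (θ : ℝ) (hθ : 0 < θ) :
    (∀ s : ℝ, 0 < s → 1 < s * (Real.cosh s / Real.sinh s)) ∧
    (∀ v : EuclideanSpace ℝ (Fin (n + 1)), mink x v = 0 → v ≠ 0 →
      0 < 2 * (mink u v * mink u v +
        θ * (Real.cosh θ / Real.sinh θ) *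
          (mink v v + mink x v * mink x v - mink u v * mink u v))) := by
  refine ⟨fun s hs => one_lt_mul_coth hs, fun v hxv hv => ?_⟩
  have htimelike : mink x x < 0 := by rw [hx]; norm_num
  have hcoth := one_lt_mul_coth hθ
  have hvv := mink.pos_of_timelike_of_orthogonal htimelike hxv hv
  have hsq := mink.sq_le_of_timelike_of_orthogonal htimelike hu hxu hxv
  rw [hxv]
  nlinarith

/-- For `θ > 0` one has `θ coth θ > 1`; consequently the Hessian of the hyperbolic
squared distance, `H = 2J(uuᵀ + θcothθ(J + xxᵀ - uuᵀ))J` (given here as the bilinear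
form `H(v,w) = 2(⟪u,v⟫_*⟪u,w⟫_* + θcothθ(⟪v,w⟫_* + ⟪x,v⟫_*⟪x,w⟫_* - ⟪u,v⟫_*⟪u,w⟫_*))`),
is positive definite on the tangent space `T_x H^n = {v : ⟪x,v⟫_* = 0}`. -/
theorem stmt13 {n : ℕ} (x u : EuclideanSpace ℝ (Fin (n + 1)))
    (hx : mink x x = -1) (hx0 : 0 < x 0)
    (hu : mink u u = 1) (hxu : mink x u = 0)
    (θ : ℝ) (hθ : 0 < θ) :
    (∀ s : ℝ, 0 < s → 1 < s * (Real.cosh s / Real.sinh s)) ∧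
    (∀ v : EuclideanSpace ℝ (Fin (n + 1)), mink x v = 0 → v ≠ 0 →
      0 < 2 * (mink u v * mink u v +
        θ * (Real.cosh θ / Real.sinh θ) *
          (mink v v + mink x v * mink x v - mink u v * mink u v))) :=
  stmt13_general x u hx hu hxu θ hθ
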